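/- Let μ be a probability measure on a measurable space and τ ≥ 0 measurable with μ{τ > t} = c·t^{-β}(1+o(1)) as t → ∞, where c > 0 and β ∈ (1,2). Let γ ∈ (β-1, β), so that β - γ ∈ (0,1). Then as u → 0⁺, ∫ τ^{γ+1} e^{-u τ} dμ = C·u^{β-γ-1}(1+o(1)) for some constant C > 0 depending only on c, β, γ; in particular this integral tends to +∞ as u → 0⁺. -/

import Mathlib

/-!
With `S t = μ {τ > t}` and `F(t) = t^(γ+1) e^(-ut)`, the layer cake formula
`∫ F ∘ τ dμ = ∫₀^∞ F'(s) S(s) ds` gives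
`I(u) = (γ+1) J_γ(u) - u J_(γ+1)(u)` with `J_α(u) = ∫₀^∞ s^α e^(-us) S(s) ds`.
Writing `S(s) = s^(-β) h(s)` with `h → c` and substituting `s = x/u`,
`u^(α+1-β) J_α(u) = ∫₀^∞ e^(-x) x^(α-β) h(x/u) dx → c Γ(α+1-β)` by dominated convergence
(`h` is bounded on `(0, ∞)`). Hence `u^(γ+1-β) I(u)` tends to
`c ((γ+1) Γ(γ+1-β) - Γ(γ+2-β)) = c β Γ(γ+1-β) > 0`.
-/

open MeasureTheory Filter Topology Set Real

theorem integrableOn_rpow_mul_exp_neg_mul {s b : ℝ} (hs : -1 < s) (hb : 0 < b) :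
    IntegrableOn (fun x : ℝ => x ^ s * exp (-(b * x))) (Ioi 0) := by
  simpa [rpow_one, neg_mul] using integrableOn_rpow_mul_exp_neg_mul_rpow hs one_pos hb

theorem continuous_rpow_mul_exp_neg_mul {α : ℝ} (hα : 0 ≤ α) (u : ℝ) :
    Continuous fun s : ℝ => s ^ α * exp (-(u * s)) :=
  (continuous_rpow_const hα).mul (by fun_prop)

theorem rpow_add_one_mul_exp_neg_mul_eq {γ : ℝ} (hγ : 0 ≤ γ) (u t : ℝ) :
    t ^ (γ + 1) * exp (-(u * t)) = (γ + 1) * (∫ s in 0..t, s ^ γ * exp (-(u * s)))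
      - u * ∫ s in 0..t, s ^ (γ + 1) * exp (-(u * s)) := by
  have hderiv : ∀ s : ℝ, HasDerivAt (fun s : ℝ => s ^ (γ + 1) * exp (-(u * s)))
      ((γ + 1) * (s ^ γ * exp (-(u * s))) - u * (s ^ (γ + 1) * exp (-(u * s)))) s := by
    intro s
    have hpow := hasDerivAt_rpow_const (x := s) (p := γ + 1) (Or.inr (by linarith))
    rw [add_sub_cancel_right] at hpow
    have hexp : HasDerivAt (fun s : ℝ => exp (-(u * s))) (exp (-(u * s)) * -u) s := by
      simpa using (((hasDerivAt_id s).const_mul u).neg).exp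
    exact (hpow.mul hexp).congr_deriv (by ring)
  have hc₁ := continuous_rpow_mul_exp_neg_mul hγ u
  have hc₂ := continuous_rpow_mul_exp_neg_mul (by linarith : 0 ≤ γ + 1) u
  rw [← intervalIntegral.integral_const_mul, ← intervalIntegral.integral_const_mul,
    ← intervalIntegral.integral_sub ((hc₁.intervalIntegrable 0 t).const_mul _)
      ((hc₂.intervalIntegrable 0 t).const_mul _),
    intervalIntegral.integral_eq_sub_of_hasDerivAt (fun s _ => hderiv s)
      (((hc₁.const_mul _).sub (hc₂.const_mul _)).intervalIntegrable 0 t),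
    zero_rpow (by linarith), zero_mul, sub_zero]

theorem tendsto_rpow_mul_of_eventuallyEq_mul_one_add {S e : ℝ → ℝ} {c β : ℝ}
    (he : Tendsto e atTop (𝓝 0)) (hS : ∀ᶠ t in atTop, S t = c * t ^ (-β) * (1 + e t)) :
    Tendsto (fun t => t ^ β * S t) atTop (𝓝 c) := by
  have hlim : Tendsto (fun t => c * (1 + e t)) atTop (𝓝 c) := by
    simpa using (he.const_add 1).const_mul c
  refine hlim.congr' ?_
  filter_upwards [hS, eventually_gt_atTop 0] with t hSt ht
  rw [hSt, rpow_neg ht.le]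
  field_simp

theorem exists_abs_rpow_mul_le_of_tendsto {S : ℝ → ℝ} {c β M : ℝ} (hβ : 0 ≤ β)
    (hM : ∀ t, |S t| ≤ M) (hS : Tendsto (fun t => t ^ β * S t) atTop (𝓝 c)) :
    ∃ K, ∀ t, 0 < t → |t ^ β * S t| ≤ K := by
  obtain ⟨T, hT⟩ := eventually_atTop.1 (hS.abs.eventually (eventually_le_nhds (lt_add_one |c|)))
  refine ⟨max (|c| + 1) (T ^ β * M), fun t ht => ?_⟩
  rcases le_or_gt T t with hTt | htT
  · exact (hT t hTt).trans (le_max_left _ _)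
  · refine le_trans ?_ (le_max_right _ _)
    rw [abs_mul, abs_of_nonneg (rpow_nonneg ht.le _)]
    exact mul_le_mul (rpow_le_rpow ht.le htT.le hβ) (hM t) (abs_nonneg _)
      (rpow_nonneg (ht.trans htT).le _)

theorem rpow_mul_integral_rpow_sub_one_mul_exp_neg_mul (h : ℝ → ℝ) (q : ℝ) {u : ℝ}
    (hu : 0 < u) :
    u ^ q * ∫ s in Ioi 0, s ^ (q - 1) * exp (-(u * s)) * h s
      = ∫ x in Ioi 0, exp (-x) * x ^ (q - 1) * h (x / u) := by
  have hsubst := integral_comp_mul_left_Ioi (fun x => exp (-x) * x ^ (q - 1) * h (x / u)) 0 hu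
  rw [mul_zero, smul_eq_mul] at hsubst
  have hscale : ∫ s in Ioi 0, exp (-(u * s)) * (u * s) ^ (q - 1) * h (u * s / u)
      = u ^ (q - 1) * ∫ s in Ioi 0, s ^ (q - 1) * exp (-(u * s)) * h s := by
    rw [← integral_const_mul]
    refine setIntegral_congr_fun measurableSet_Ioi fun s hs => ?_
    rw [mul_rpow hu.le (le_of_lt hs), mul_div_cancel_left₀ _ hu.ne']
    ring
  rw [hscale, rpow_sub_one hu.ne'] at hsubst
  field_simp at hsubst
  exact hsubst

theorem tendsto_integral_exp_neg_mul_rpow_mul_comp_div {h : ℝ → ℝ} {c K q : ℝ}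
    (hm : Measurable h) (hK : ∀ t, 0 < t → |h t| ≤ K) (hlim : Tendsto h atTop (𝓝 c))
    (hq : 0 < q) :
    Tendsto (fun u => ∫ x in Ioi 0, exp (-x) * x ^ (q - 1) * h (x / u)) (𝓝[>] 0)
      (𝓝 (Gamma q * c)) := by
  rw [Gamma_eq_integral hq, ← integral_mul_const]
  refine tendsto_integral_filter_of_dominated_convergence
    (fun x => exp (-x) * x ^ (q - 1) * K) (Eventually.of_forall fun u => ?_) ?_
    ((GammaIntegral_convergent hq).mul_const K) ?_
  · exact (by fun_prop : Measurable fun x : ℝ => exp (-x) * x ^ (q - 1) * h (x / u))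
      |>.aestronglyMeasurable
  · filter_upwards [self_mem_nhdsWithin] with u (hu : 0 < u)
    refine (ae_restrict_iff' measurableSet_Ioi).2 (Eventually.of_forall fun x (hx : 0 < x) => ?_)
    rw [norm_mul, Real.norm_of_nonneg (by positivity), Real.norm_eq_abs]
    exact mul_le_mul_of_nonneg_left (hK _ (div_pos hx hu)) (by positivity)
  · refine (ae_restrict_iff' measurableSet_Ioi).2 (Eventually.of_forall fun x (hx : 0 < x) => ?_)
    have hdiv : Tendsto (fun u => x / u) (𝓝[>] 0) atTop := by
      simpa only [div_eq_mul_inv] using tendsto_inv_nhdsGT_zero.const_mul_atTop hx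
    exact tendsto_const_nhds.mul (hlim.comp hdiv)

theorem tendsto_rpow_mul_integral_rpow_mul_exp_neg_mul_of_tendsto {S : ℝ → ℝ} {c β M α : ℝ}
    (hSm : Measurable S) (hβ : 0 ≤ β) (hM : ∀ t, |S t| ≤ M)
    (hS : Tendsto (fun t => t ^ β * S t) atTop (𝓝 c)) (hα : β - 1 < α) :
    Tendsto (fun u => u ^ (α + 1 - β) * ∫ s in Ioi 0, s ^ α * exp (-(u * s)) * S s)
      (𝓝[>] 0) (𝓝 (Gamma (α + 1 - β) * c)) := by
  obtain ⟨K, hK⟩ := exists_abs_rpow_mul_le_of_tendsto hβ hM hS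
  refine (tendsto_integral_exp_neg_mul_rpow_mul_comp_div (by fun_prop) hK hS
    (by linarith)).congr' ?_
  filter_upwards [self_mem_nhdsWithin] with u (hu : 0 < u)
  refine (rpow_mul_integral_rpow_sub_one_mul_exp_neg_mul (fun t => t ^ β * S t) _ hu).symm.trans
    ?_
  congr 1
  refine setIntegral_congr_fun measurableSet_Ioi fun s (hs : 0 < s) => ?_
  rw [show α + 1 - β - 1 = α - β by ring, rpow_sub hs]
  field_simp

theorem measurable_measureReal_lt {X : Type*} [MeasurableSpace X] (μ : Measure X)
    [IsFiniteMeasure μ] (f : X → ℝ) : Measurable fun t => μ.real {x | t < f x} :=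
  Antitone.measurable fun _ _ hab => measureReal_mono fun _ hx => hab.trans_lt hx

section Tail

variable {X : Type*} [MeasurableSpace X] (μ : Measure X) [IsFiniteMeasure μ]
  {f : X → ℝ} {g : ℝ → ℝ}

theorem integral_intervalIntegral_comp_eq_integral_mul_measureReal_lt (hf : Measurable f)
    (hf0 : ∀ x, 0 ≤ f x) (hg : Continuous g) (hg0 : ∀ t, 0 ≤ t → 0 ≤ g t) :
    ∫ x, (∫ s in 0..f x, g s) ∂μ = ∫ s in Ioi 0, g s * μ.real {x | s < f x} := by
  have hG : Continuous fun t : ℝ => ∫ s in 0..t, g s :=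
    intervalIntegral.continuous_primitive (fun a b => hg.intervalIntegrable a b) 0
  have hcake := lintegral_comp_eq_lintegral_meas_lt_mul μ (Eventually.of_forall hf0)
    hf.aemeasurable (fun t _ => hg.intervalIntegrable 0 t)
    ((ae_restrict_iff' measurableSet_Ioi).2 (Eventually.of_forall fun t ht => hg0 t ht.le))
  rw [integral_eq_lintegral_of_nonneg_ae
      (Eventually.of_forall fun x => intervalIntegral.integral_nonneg (hf0 x)
        fun s hs => hg0 s hs.1) (hG.measurable.comp hf).aestronglyMeasurable,
    integral_eq_lintegral_of_nonneg_ae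
      ((ae_restrict_iff' measurableSet_Ioi).2 (Eventually.of_forall fun t ht =>
        mul_nonneg (hg0 t ht.le) measureReal_nonneg))
      (hg.measurable.mul (measurable_measureReal_lt μ f)).aestronglyMeasurable, hcake]
  congr 1
  refine setLIntegral_congr_fun measurableSet_Ioi fun t ht => ?_
  rw [ENNReal.ofReal_mul (hg0 t (le_of_lt ht)), measureReal_def,
    ENNReal.ofReal_toReal (measure_ne_top μ _), mul_comm]

theorem integrable_intervalIntegral_comp (hf : Measurable f) (hf0 : ∀ x, 0 ≤ f x)
    (hg : Continuous g) (hg0 : ∀ t, 0 ≤ t → 0 ≤ g t) (hgi : IntegrableOn g (Ioi 0)) :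
    Integrable (fun x => ∫ s in 0..f x, g s) μ := by
  have hG : Continuous fun t : ℝ => ∫ s in 0..t, g s :=
    intervalIntegral.continuous_primitive (fun a b => hg.intervalIntegrable a b) 0
  refine Integrable.mono' (integrable_const (∫ s in Ioi 0, g s))
    (hG.measurable.comp hf).aestronglyMeasurable (Eventually.of_forall fun x => ?_)
  rw [Real.norm_of_nonneg (intervalIntegral.integral_nonneg (hf0 x) fun s hs => hg0 s hs.1),
    intervalIntegral.integral_of_le (hf0 x)]
  exact setIntegral_mono_set hgi
    ((ae_restrict_iff' measurableSet_Ioi).2 (Eventually.of_forall fun t ht => hg0 t ht.le))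
    Ioc_subset_Ioi_self.eventuallyLE

theorem integral_rpow_add_one_mul_exp_neg_mul_comp (hf : Measurable f) (hf0 : ∀ x, 0 ≤ f x)
    {γ u : ℝ} (hγ : 0 ≤ γ) (hu : 0 < u) :
    ∫ x, f x ^ (γ + 1) * exp (-(u * f x)) ∂μ
      = (γ + 1) * (∫ s in Ioi 0, s ^ γ * exp (-(u * s)) * μ.real {x | s < f x})
        - u * ∫ s in Ioi 0, s ^ (γ + 1) * exp (-(u * s)) * μ.real {x | s < f x} := by
  have hweight : ∀ α : ℝ, 0 ≤ α →
      Integrable (fun x => ∫ s in 0..f x, s ^ α * exp (-(u * s))) μ ∧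
      ∫ x, (∫ s in 0..f x, s ^ α * exp (-(u * s))) ∂μ
        = ∫ s in Ioi 0, s ^ α * exp (-(u * s)) * μ.real {x | s < f x} := fun α hα =>
    have hg0 : ∀ t : ℝ, 0 ≤ t → 0 ≤ t ^ α * exp (-(u * t)) := fun t ht => by positivity
    ⟨integrable_intervalIntegral_comp μ hf hf0 (continuous_rpow_mul_exp_neg_mul hα u) hg0
      (integrableOn_rpow_mul_exp_neg_mul (by linarith) hu),
    integral_intervalIntegral_comp_eq_integral_mul_measureReal_lt μ hf hf0
      (continuous_rpow_mul_exp_neg_mul hα u) hg0⟩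
  obtain ⟨hi₁, he₁⟩ := hweight γ hγ
  obtain ⟨hi₂, he₂⟩ := hweight (γ + 1) (by linarith)
  simp_rw [rpow_add_one_mul_exp_neg_mul_eq hγ u (f _)]
  rw [integral_sub (hi₁.const_mul _) (hi₂.const_mul _), integral_const_mul, integral_const_mul,
    he₁, he₂]

theorem tendsto_rpow_mul_integral_rpow_add_one_mul_exp_neg_mul_comp (hf : Measurable f)
    (hf0 : ∀ x, 0 ≤ f x) {c β γ : ℝ} (hβ : 0 ≤ β) (hγ : 0 ≤ γ) (hβγ : β - 1 < γ)
    (hS : Tendsto (fun t => t ^ β * μ.real {x | t < f x}) atTop (𝓝 c)) :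
    Tendsto (fun u => u ^ (γ + 1 - β) * ∫ x, f x ^ (γ + 1) * exp (-(u * f x)) ∂μ)
      (𝓝[>] 0) (𝓝 (β * Gamma (γ + 1 - β) * c)) := by
  have hSm := measurable_measureReal_lt μ f
  have hSb : ∀ t, |μ.real {x | t < f x}| ≤ μ.real univ := fun t => by
    rw [abs_of_nonneg measureReal_nonneg]
    exact measureReal_mono (subset_univ _)
  have hJ₁ := tendsto_rpow_mul_integral_rpow_mul_exp_neg_mul_of_tendsto (α := γ) hSm hβ hSb hS hβγ
  have hJ₂ := tendsto_rpow_mul_integral_rpow_mul_exp_neg_mul_of_tendsto (α := γ + 1) hSm hβ hSb hS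
    (by linarith)
  have hΓ : (γ + 1) * (Gamma (γ + 1 - β) * c) - Gamma (γ + 1 + 1 - β) * c
      = β * Gamma (γ + 1 - β) * c := by
    rw [show γ + 1 + 1 - β = γ + 1 - β + 1 by ring, Gamma_add_one (by linarith)]
    ring
  refine (hΓ ▸ (hJ₁.const_mul (γ + 1)).sub hJ₂).congr' ?_
  filter_upwards [self_mem_nhdsWithin] with u (hu : 0 < u)
  rw [integral_rpow_add_one_mul_exp_neg_mul_comp μ hf hf0 hγ hu,
    show γ + 1 + 1 - β = γ + 1 - β + 1 by ring, rpow_add_one hu.ne']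
  ring

end Tail

theorem exists_eq_mul_rpow_mul_one_add_of_tendsto {I : ℝ → ℝ} {C q : ℝ} (hC : C ≠ 0)
    (hI : Tendsto (fun u => u ^ (-q) * I u) (𝓝[>] 0) (𝓝 C)) :
    ∃ e : ℝ → ℝ, Tendsto e (𝓝[>] 0) (𝓝 0) ∧ ∀ᶠ u in 𝓝[>] 0, I u = C * u ^ q * (1 + e u) := by
  refine ⟨fun u => u ^ (-q) * I u / C - 1, by simpa [hC] using (hI.div_const C).sub_const 1, ?_⟩
  filter_upwards [self_mem_nhdsWithin] with u (hu : 0 < u)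
  rw [rpow_neg hu.le]
  field_simp
  ring

theorem tendsto_atTop_of_tendsto_rpow_neg_mul {I : ℝ → ℝ} {C q : ℝ} (hC : 0 < C) (hq : q < 0)
    (hI : Tendsto (fun u => u ^ (-q) * I u) (𝓝[>] 0) (𝓝 C)) :
    Tendsto I (𝓝[>] 0) atTop := by
  refine (hI.pos_mul_atTop hC (tendsto_rpow_neg_nhdsGT_zero hq)).congr' ?_
  filter_upwards [self_mem_nhdsWithin] with u (hu : 0 < u)
  rw [rpow_neg hu.le]
  field_simp

theorem laplace_asymptotic_general {X : Type*} [MeasurableSpace X]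
    (μ : Measure X) [IsProbabilityMeasure μ]
    (τ : X → ℝ) (hτm : Measurable τ) (hτ0 : ∀ x, 0 ≤ τ x)
    (c β γ : ℝ) (hc : 0 < c) (hβ1 : 1 < β)
    (hγ1 : β - 1 < γ)
    (htail : ∃ e : ℝ → ℝ, Tendsto e atTop (𝓝 0) ∧
      ∀ᶠ t in atTop, (μ {x | t < τ x}).toReal = c * t ^ (-β) * (1 + e t)) :
    (∃ C : ℝ, 0 < C ∧ ∃ e : ℝ → ℝ, Tendsto e (𝓝[>] (0:ℝ)) (𝓝 0) ∧
      ∀ᶠ u in 𝓝[>] (0:ℝ),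
        ∫ x, τ x ^ (γ + 1) * Real.exp (-(u * τ x)) ∂μ
          = C * u ^ (β - γ - 1) * (1 + e u)) ∧
    Tendsto (fun u : ℝ => ∫ x, τ x ^ (γ + 1) * Real.exp (-(u * τ x)) ∂μ)
      (𝓝[>] (0:ℝ)) atTop := by
  obtain ⟨e, he, htail⟩ := htail
  have hlim := tendsto_rpow_mul_integral_rpow_add_one_mul_exp_neg_mul_comp μ hτm hτ0
    (by linarith) (by linarith) hγ1 (tendsto_rpow_mul_of_eventuallyEq_mul_one_add he htail)
  rw [show γ + 1 - β = -(β - γ - 1) by ring] at hlim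
  have hC : 0 < β * Gamma (-(β - γ - 1)) * c :=
    mul_pos (mul_pos (by linarith) (Gamma_pos_of_pos (by linarith))) hc
  exact ⟨⟨_, hC, exists_eq_mul_rpow_mul_one_add_of_tendsto hC.ne' hlim⟩,
    tendsto_atTop_of_tendsto_rpow_neg_mul hC (by linarith) hlim⟩

theorem laplace_asymptotic {X : Type*} [MeasurableSpace X]
    (μ : Measure X) [IsProbabilityMeasure μ]
    (τ : X → ℝ) (hτm : Measurable τ) (hτ0 : ∀ x, 0 ≤ τ x)
    (c β γ : ℝ) (hc : 0 < c) (hβ1 : 1 < β) (hβ2 : β < 2)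
    (hγ1 : β - 1 < γ) (hγ2 : γ < β)
    (htail : ∃ e : ℝ → ℝ, Tendsto e atTop (𝓝 0) ∧
      ∀ᶠ t in atTop, (μ {x | t < τ x}).toReal = c * t ^ (-β) * (1 + e t)) :
    (∃ C : ℝ, 0 < C ∧ ∃ e : ℝ → ℝ, Tendsto e (𝓝[>] (0:ℝ)) (𝓝 0) ∧
      ∀ᶠ u in 𝓝[>] (0:ℝ),
        ∫ x, τ x ^ (γ + 1) * Real.exp (-(u * τ x)) ∂μ
          = C * u ^ (β - γ - 1) * (1 + e u)) ∧
    Tendsto (fun u : ℝ => ∫ x, τ x ^ (γ + 1) * Real.exp (-(u * τ x)) ∂μ)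
      (𝓝[>] (0:ℝ)) atTop :=
  laplace_asymptotic_general μ τ hτm hτ0 c β γ hc hβ1 hγ1 htail
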